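/- Let p be a prime, n, m ≥ 1, and GR(p^n,m) = (ZMod (p^n))[X]/(f) for a monic basic irreducible f of degree m. Let T = {x ∈ GR(p^n,m) : x^{p^m} = x}. Then the restriction to T of the quotient map GR(p^n,m) → GR(p^n,m)/(p) is a bijection from T onto the residue field GR(p^n,m)/(p); in particular T has exactly p^m elements. -/

import Mathlib

/-!
Let `d` be a nilpotent element of a commutative ring dividing `k`. Since
`(a ^ k - b ^ k) / (a - b) ≡ k * b ^ (k - 1) ≡ 0 (mod d)` whenever `d ∣ a - b`, the map
`x ↦ x ^ k` raises the `d`-adic order of differences by one. Hence two fixed points of `x ↦ x ^ k`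
that agree modulo `d` agree modulo every power of `d`, so they are equal; and if `a ^ k ≡ a` then
the sequence `a ^ k ^ j` becomes stationary at a fixed point congruent to `a`. For
`GR(p ^ n, m)` take `d = p`, `k = p ^ m`: the residue ring is `𝔽_p[X] ⧸ (f mod p)`, a field with
`p ^ m` elements, in which every element is fixed by `z ↦ z ^ p ^ m`.
-/

open Polynomial

section Teichmuller

variable {R : Type*} [CommRing R] {d : R} {k : ℕ}

theorem pow_succ_dvd_pow_sub_pow_of_pow_dvd_sub (hk : d ∣ (k : R)) {a b : R} {j : ℕ}
    (hj : j ≠ 0) (h : d ^ j ∣ a - b) : d ^ (j + 1) ∣ a ^ k - b ^ k := by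
  rw [← geom_sum₂_mul, pow_succ, mul_comm]
  refine mul_dvd_mul ?_ h
  rw [dvd_geom_sum₂_iff_of_dvd_sub ((dvd_pow_self d hj).trans h)]
  exact hk.mul_right _

theorem eq_of_pow_eq_self_of_dvd_sub (hk : d ∣ (k : R)) (hd : IsNilpotent d) {x y : R}
    (hx : x ^ k = x) (hy : y ^ k = y) (h : d ∣ x - y) : x = y := by
  have hdvd : ∀ j, d ^ (j + 1) ∣ x - y := by
    intro j
    induction j with
    | zero => simpa using h
    | succ j ih => simpa [hx, hy] using pow_succ_dvd_pow_sub_pow_of_pow_dvd_sub hk j.succ_ne_zero ih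
  obtain ⟨n, hn⟩ := hd
  simpa [pow_succ, hn, sub_eq_zero] using hdvd n

theorem exists_pow_eq_self_dvd_sub (hk : d ∣ (k : R)) (hd : IsNilpotent d) {a : R}
    (ha : d ∣ a ^ k - a) : ∃ x, x ^ k = x ∧ d ∣ x - a := by
  have step : ∀ j, d ^ (j + 1) ∣ a ^ k ^ (j + 1) - a ^ k ^ j := by
    intro j
    induction j with
    | zero => simpa using ha
    | succ j ih =>
      simpa only [← pow_mul, ← pow_succ] using
        pow_succ_dvd_pow_sub_pow_of_pow_dvd_sub hk j.succ_ne_zero ih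
  have close : ∀ j, d ∣ a ^ k ^ j - a := by
    intro j
    induction j with
    | zero => simp
    | succ j ih =>
      rw [← sub_add_sub_cancel _ (a ^ k ^ j)]
      exact dvd_add ((dvd_pow_self d j.succ_ne_zero).trans (step j)) ih
  obtain ⟨n, hn⟩ := hd
  refine ⟨a ^ k ^ n, ?_, close n⟩
  simpa [← pow_mul, ← pow_succ, pow_succ d, hn, sub_eq_zero] using step n

theorem bijOn_quotient_mk_setOf_pow_eq_self (hk : d ∣ (k : R)) (hd : IsNilpotent d)
    (hfrob : ∀ z : R ⧸ Ideal.span {d}, z ^ k = z) :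
    Set.BijOn (Ideal.Quotient.mk (Ideal.span {d})) {x | x ^ k = x} Set.univ := by
  have hmk : ∀ x y : R, Ideal.Quotient.mk (Ideal.span {d}) x = Ideal.Quotient.mk _ y ↔ d ∣ x - y :=
    fun x y => by rw [Ideal.Quotient.mk_eq_mk_iff_sub_mem, Ideal.mem_span_singleton]
  refine ⟨Set.mapsTo_univ _ _, fun x hx y hy hxy => ?_, fun z _ => ?_⟩
  · exact eq_of_pow_eq_self_of_dvd_sub hk hd hx hy ((hmk x y).1 hxy)
  · obtain ⟨a, rfl⟩ := Ideal.Quotient.mk_surjective z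
    obtain ⟨x, hx, hxa⟩ := exists_pow_eq_self_dvd_sub hk hd ((hmk _ a).1 (by simpa using hfrob _))
    exact ⟨x, hx, (hmk x a).2 hxa⟩

end Teichmuller

theorem ZMod.ker_castHom {m k : ℕ} (h : m ∣ k) :
    RingHom.ker (ZMod.castHom h (ZMod m)) = Ideal.span {(m : ZMod k)} := by
  have hcomp : (ZMod.castHom h (ZMod m)).comp (Int.castRingHom (ZMod k)) = Int.castRingHom _ :=
    RingHom.ext_int _ _
  rw [← Ideal.map_comap_of_surjective (Int.castRingHom (ZMod k)) ZMod.intCast_surjective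
    (RingHom.ker _), RingHom.comap_ker, hcomp, ZMod.ker_intCastRingHom, Ideal.map_span,
    Set.image_singleton, eq_intCast, Int.cast_natCast]

noncomputable def AdjoinRoot.quotMapKerEquiv {R S : Type*} [CommRing R] [CommRing S]
    (φ : R →+* S) (hφ : Function.Surjective φ) (f : R[X]) :
    AdjoinRoot f ⧸ (RingHom.ker φ).map (of f) ≃+* AdjoinRoot (f.map φ) :=
  (quotAdjoinRootEquivQuotPolynomialQuot (RingHom.ker φ) f).trans <|
    mapRingEquiv (φ.quotientKerEquivOfSurjective hφ) _ _ <| by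
      rw [Polynomial.map_map]
      rfl

theorem AdjoinRoot.natCard_eq_pow_natDegree {K : Type*} [Field K] {g : K[X]} (hg : g ≠ 0) :
    Nat.card (AdjoinRoot g) = Nat.card K ^ g.natDegree := by
  have := (powerBasis hg).finite
  rw [Module.natCard_eq_pow_finrank (K := K), (powerBasis hg).finrank, powerBasis_dim]

/-- The quotient map `GR(p^n,m) → GR(p^n,m)/(p)` restricts to a bijection
from the Teichmüller set `T = {x : x ^ (p^m) = x}` onto the residue field; in particular `T`
has exactly `p ^ m` elements. -/
theorem galois_ring_teichmuller_bijection (p n m : ℕ) (hp : p.Prime) (hn : 0 < n) (hm : 0 < m)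
    (f : Polynomial (ZMod (p ^ n))) (hf : f.Monic) (hdeg : f.natDegree = m)
    (hirr : Irreducible (f.map (ZMod.castHom (dvd_pow_self p hn.ne') (ZMod p)))) :
    Set.BijOn (Ideal.Quotient.mk (Ideal.span {(p : AdjoinRoot f)}))
      {x : AdjoinRoot f | x ^ p ^ m = x} Set.univ ∧
    Set.ncard {x : AdjoinRoot f | x ^ p ^ m = x} = p ^ m := by
  have : Fact p.Prime := ⟨hp⟩
  set g := f.map (ZMod.castHom (dvd_pow_self p hn.ne') (ZMod p))
  have : Fact (Irreducible g) := ⟨hirr⟩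
  let e : AdjoinRoot f ⧸ Ideal.span {(p : AdjoinRoot f)} ≃+* AdjoinRoot g :=
    (Ideal.quotEquivOfEq <| by
        rw [ZMod.ker_castHom, Ideal.map_span, Set.image_singleton, map_natCast]).trans <|
      AdjoinRoot.quotMapKerEquiv _ (ZMod.castHom_surjective _) f
  have hcard : Nat.card (AdjoinRoot g) = p ^ m := by
    rw [AdjoinRoot.natCard_eq_pow_natDegree (hf.map _).ne_zero, Nat.card_zmod, hf.natDegree_map,
      hdeg]
  have : Fintype (AdjoinRoot g) :=
    @Fintype.ofFinite _ (Nat.finite_of_card_ne_zero (hcard ▸ (pow_pos hp.pos m).ne'))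
  have hfrob (z : AdjoinRoot f ⧸ Ideal.span {(p : AdjoinRoot f)}) : z ^ p ^ m = z :=
    e.injective <| by rw [map_pow, ← hcard, Nat.card_eq_fintype_card, FiniteField.pow_card]
  have hnil : IsNilpotent (p : AdjoinRoot f) :=
    ⟨n, by rw [← Nat.cast_pow, ← map_natCast (AdjoinRoot.of f), ZMod.natCast_self, map_zero]⟩
  have hbij := bijOn_quotient_mk_setOf_pow_eq_self (k := p ^ m)
    (by rw [Nat.cast_pow]; exact dvd_pow_self _ hm.ne') hnil hfrob
  refine ⟨hbij, ?_⟩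
  rw [← hbij.injOn.ncard_image, hbij.image_eq, Set.ncard_univ, Nat.card_congr e.toEquiv, hcard]
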